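/- arXiv:2110.00671 — 4 statements merged into one kernel-verified Lean document; each statement's English description precedes it below -/
import Mathlib

section
/- Let P ⊆ ℝ² be a finite nonempty set and let Q ⊆ P be nonempty. Then the Hausdorff distance between convexHull Q and convexHull P equals max_{p ∈ P} dist(p, convexHull Q); in other words, cost(Q,P) is exactly the Hausdorff distance between the two convex hulls. -/
open Set Metric

lemma convexOn_infDist' {E : Type*} [NormedAddCommGroup E] [NormedSpace ℝ E] (C : Set E)
    (hC : Convex ℝ C) (hne : C.Nonempty) : ConvexOn ℝ univ (fun x => infDist x C) := by
  refine ⟨convex_univ, fun x _ y _ a b ha hb hab => ?_⟩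
  refine le_of_forall_pos_le_add fun ε hε => ?_
  obtain ⟨p, hp, hxp⟩ := (infDist_lt_iff hne).1 (lt_add_of_pos_right (infDist x C) hε)
  obtain ⟨q, hq, hyq⟩ := (infDist_lt_iff hne).1 (lt_add_of_pos_right (infDist y C) hε)
  have hmem : a • p + b • q ∈ C := hC hp hq ha hb hab
  have h1 : infDist (a • x + b • y) C ≤ dist (a • x + b • y) (a • p + b • q) :=
    infDist_le_dist_of_mem hmem
  have h2 : dist (a • x + b • y) (a • p + b • q) ≤ a * dist x p + b * dist y q := by
    have : a • x + b • y - (a • p + b • q) = a • (x - p) + b • (y - q) := by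
      simp [smul_sub]; abel
    rw [dist_eq_norm, this]
    calc ‖a • (x - p) + b • (y - q)‖ ≤ ‖a • (x - p)‖ + ‖b • (y - q)‖ := norm_add_le _ _
      _ = a * dist x p + b * dist y q := by
          rw [norm_smul, norm_smul, Real.norm_of_nonneg ha, Real.norm_of_nonneg hb,
            dist_eq_norm, dist_eq_norm]
  simp only [smul_eq_mul]
  nlinarith [h1, h2, mul_le_mul_of_nonneg_left hxp.le ha, mul_le_mul_of_nonneg_left hyq.le hb]

noncomputable abbrev Pt := EuclideanSpace ℝ (Fin 2)

/-- `cost Q P` is the maximum (as a supremum) over `p ∈ P` of the distance from `p`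
to the convex hull of `Q`. -/
noncomputable def cost (Q P : Set Pt) : ℝ :=
  sSup ((fun p => Metric.infDist p (convexHull ℝ Q)) '' P)

theorem stmt_0 (P Q : Set Pt) (hPfin : P.Finite) (hPne : P.Nonempty)
    (hQP : Q ⊆ P) (hQne : Q.Nonempty) :
    Metric.hausdorffDist (convexHull ℝ Q) (convexHull ℝ P) = cost Q P := by
  set C := convexHull ℝ Q with hC
  set D := convexHull ℝ P with hD
  have hCD : C ⊆ D := convexHull_mono hQP
  have hCne : C.Nonempty := hQne.mono (subset_convexHull ℝ Q)
  have hDne : D.Nonempty := hPne.mono (subset_convexHull ℝ P)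
  have hDb : Bornology.IsBounded D := isBounded_convexHull.2 hPfin.isBounded
  have hCb : Bornology.IsBounded C := hDb.subset hCD
  have hfin : EMetric.hausdorffEdist C D ≠ ⊤ :=
    Metric.hausdorffEdist_ne_top_of_nonempty_of_bounded hCne hDne hCb hDb
  have hbdd : BddAbove ((fun p => Metric.infDist p C) '' P) :=
    (hPfin.image _).bddAbove
  have himne : ((fun p => Metric.infDist p C) '' P).Nonempty := hPne.image _
  have hr0 : 0 ≤ cost Q P := by
    obtain ⟨p, hp⟩ := hPne
    exact le_trans (infDist_nonneg) (le_csSup hbdd (mem_image_of_mem _ hp))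
  apply le_antisymm
  · apply hausdorffDist_le_of_infDist hr0
    · intro x hx
      rw [infDist_zero_of_mem (hCD hx)]
      exact hr0
    · intro x hx
      obtain ⟨y, hy, hxy⟩ := (convexOn_infDist' C (convex_convexHull ℝ Q)
        hCne).exists_ge_of_mem_convexHull (subset_univ P) hx
      exact le_trans hxy (le_csSup hbdd (mem_image_of_mem _ hy))
  · apply Real.sSup_le _ hausdorffDist_nonneg
    rintro r ⟨p, hp, rfl⟩
    have hfin' : EMetric.hausdorffEdist D C ≠ ⊤ := by
      exact fun h => hfin ((EMetric.hausdorffEdist_comm (s := C) (t := D)).trans h)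
    have := infDist_le_hausdorffDist_of_mem (subset_convexHull ℝ P hp) hfin'
    rwa [hausdorffDist_comm] at this
end

section
/- Let P ⊆ ℝ² be a finite set in convex position, let Q ⊆ P be nonempty, and let a, b ∈ Q be distinct. Suppose there is a nonzero vector u ∈ ℝ² with ⟨u,a⟩ = ⟨u,b⟩ and ⟨u,q⟩ ≤ ⟨u,a⟩ for every q ∈ Q (i.e., a and b are consecutive in the convex-position ordering of Q, with all of Q on one closed side of the line through a and b). Then for every x ∈ P with ⟨u,x⟩ > ⟨u,a⟩ (i.e., x lies strictly on the other side of that line), dist(x, convexHull Q) = dist(x, [a,b]). -/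
open Set Metric
open scoped RealInnerProductSpace

/-- `P` is in convex position: no point of `P` is in the convex hull of the others. -/
def ConvexPosition (P : Set Pt) : Prop :=
  ∀ p ∈ P, p ∉ convexHull ℝ (P \ {p})

private lemma inner_coords (p q : Pt) : ⟪p, q⟫ = p 0 * q 0 + p 1 * q 1 := by
  simp [PiLp.inner_apply, RCLike.inner_apply, Fin.sum_univ_two, mul_comm]

private lemma det_eq {u v : Pt} (hv0 : v 0 = -(u 1)) (hv1 : v 1 = u 0) (hu : u ≠ 0)
    {p q : Pt} (h1 : ⟪u, p⟫ = ⟪u, q⟫) (h2 : ⟪v, p⟫ = ⟪v, q⟫) : p = q := by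
  have hK : 0 < u 0 ^ 2 + u 1 ^ 2 := by
    rcases eq_or_ne (u 0) 0 with h0 | h0
    · have h1' : u 1 ≠ 0 := by
        intro h1'
        exact hu (by ext i; fin_cases i <;> simp [h0, h1'])
      positivity
    · positivity
  rw [inner_coords, inner_coords] at h1 h2
  rw [hv0, hv1] at h2
  ext i
  fin_cases i
  · show p 0 = q 0
    have e0 : (p 0 - q 0) * (u 0 ^ 2 + u 1 ^ 2) = 0 := by linear_combination u 0 * h1 - u 1 * h2
    have := (mul_eq_zero.mp e0).resolve_right hK.ne'
    linarith
  · show p 1 = q 1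
    have e1 : (p 1 - q 1) * (u 0 ^ 2 + u 1 ^ 2) = 0 := by linear_combination u 1 * h1 + u 0 * h2
    have := (mul_eq_zero.mp e1).resolve_right hK.ne'
    linarith

private lemma dist_identity {u v : Pt} (hv0 : v 0 = -(u 1)) (hv1 : v 1 = u 0) (p q : Pt) :
    (⟪u, p⟫ - ⟪u, q⟫) ^ 2 + (⟪v, p⟫ - ⟪v, q⟫) ^ 2
      = (u 0 ^ 2 + u 1 ^ 2) * dist p q ^ 2 := by
  have h : dist p q ^ 2 = (p 0 - q 0) ^ 2 + (p 1 - q 1) ^ 2 := by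
    rw [EuclideanSpace.dist_eq]
    rw [Real.sq_sqrt (by positivity)]
    simp [Fin.sum_univ_two, Real.dist_eq, sq_abs]
  rw [h, inner_coords, inner_coords, inner_coords, inner_coords, hv0, hv1]
  ring

private lemma hull_le {Q : Set Pt} {u : Pt} {c : ℝ} (h : ∀ q ∈ Q, ⟪u, q⟫ ≤ c) :
    ∀ y ∈ convexHull ℝ Q, ⟪u, y⟫ ≤ c := fun y hy =>
  convexHull_min h (convex_halfSpace_le
    ⟨fun p q => inner_add_right u p q, fun c p => real_inner_smul_right u p c⟩ c) hy

private lemma decomp {Q : Set Pt} {c y : Pt} (hc : c ∈ Q) (hne : (Q \ {c}).Nonempty)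
    (hy : y ∈ convexHull ℝ Q) : ∃ y' ∈ convexHull ℝ (Q \ {c}), y ∈ segment ℝ c y' := by
  rw [← insert_eq_of_mem hc, ← insert_diff_singleton, convexHull_insert hne] at hy
  simpa using hy

private lemma key {u v : Pt} (hdet : ∀ p q : Pt, ⟪u,p⟫ = ⟪u,q⟫ → ⟪v,p⟫ = ⟪v,q⟫ → p = q)
    {a b x y : Pt} (hsab : ⟪u,a⟫ = ⟪u,b⟫) (hsy : ⟪u,y⟫ ≤ ⟪u,a⟫)
    (hsx : ⟪u,a⟫ < ⟪u,x⟫) (htab : ⟪v,a⟫ < ⟪v,b⟫) (hty : ⟪v,b⟫ < ⟪v,y⟫)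
    (htx : ⟪v,b⟫ < ⟪v,x⟫) : b ∈ convexHull ℝ ({a, y, x} : Set Pt) := by
  have hxy : ⟪u,y⟫ < ⟪u,x⟫ := lt_of_le_of_lt hsy hsx
  have hxy' : (0:ℝ) < ⟪u,x⟫ - ⟪u,y⟫ := by linarith
  set θ : ℝ := (⟪u,x⟫ - ⟪u,a⟫)/(⟪u,x⟫ - ⟪u,y⟫) with hθdef
  have hθ0 : 0 ≤ θ := by
    apply div_nonneg <;> linarith
  have hθ1 : θ ≤ 1 := by
    rw [div_le_one hxy']; linarith
  set w : Pt := θ • y + (1-θ) • x with hwdef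
  have hθmul : θ * (⟪u,x⟫ - ⟪u,y⟫) = ⟪u,x⟫ - ⟪u,a⟫ := div_mul_cancel₀ _ hxy'.ne'
  have hsw : ⟪u,w⟫ = ⟪u,a⟫ := by
    rw [hwdef, inner_add_right, real_inner_smul_right, real_inner_smul_right]
    linear_combination -hθmul
  have htw' : ⟪v,w⟫ = θ * ⟪v,y⟫ + (1-θ) * ⟪v,x⟫ := by
    rw [hwdef, inner_add_right, real_inner_smul_right, real_inner_smul_right]
  have htw : ⟪v,b⟫ < ⟪v,w⟫ := by
    rw [htw']
    rcases le_total (⟪v,y⟫) (⟪v,x⟫) with h | h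
    · nlinarith [mul_nonneg (by linarith : (0:ℝ) ≤ 1-θ) (by linarith : (0:ℝ) ≤ ⟪v,x⟫-⟪v,y⟫)]
    · nlinarith [mul_nonneg hθ0 (by linarith : (0:ℝ) ≤ ⟪v,y⟫-⟪v,x⟫)]
  have htwa : (0:ℝ) < ⟪v,w⟫ - ⟪v,a⟫ := by linarith
  set μ : ℝ := (⟪v,w⟫ - ⟪v,b⟫)/(⟪v,w⟫ - ⟪v,a⟫) with hμdef
  have hμ0 : 0 ≤ μ := by apply div_nonneg <;> linarith
  have hμ1 : μ ≤ 1 := by rw [div_le_one htwa]; linarith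
  have hb' : μ • a + (1-μ) • w = b := by
    apply hdet
    · rw [inner_add_right, real_inner_smul_right, real_inner_smul_right, hsw, ← hsab]; ring
    · have hμmul : μ * (⟪v,w⟫ - ⟪v,a⟫) = ⟪v,w⟫ - ⟪v,b⟫ := div_mul_cancel₀ _ htwa.ne'
      rw [inner_add_right, real_inner_smul_right, real_inner_smul_right]
      linear_combination -hμmul
  have hwmem : w ∈ convexHull ℝ ({a, y, x} : Set Pt) := by
    have : w ∈ segment ℝ y x := ⟨θ, 1-θ, hθ0, by linarith, by ring, rfl⟩
    exact (convex_convexHull ℝ _).segment_subset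
      (subset_convexHull ℝ _ (by simp)) (subset_convexHull ℝ _ (by simp)) this
  have hamem : a ∈ convexHull ℝ ({a, y, x} : Set Pt) := subset_convexHull ℝ _ (by simp)
  have : b ∈ segment ℝ a w := ⟨μ, 1-μ, hμ0, by linarith, by ring, hb'⟩
  exact (convex_convexHull ℝ _).segment_subset hamem hwmem this

private lemma aux {P Q : Set Pt} (hconv : ConvexPosition P) (hQP : Q ⊆ P)
    {a b : Pt} (ha : a ∈ Q) (hb : b ∈ Q) (hab : a ≠ b) {u v : Pt} {K : ℝ}
    (hdet : ∀ p q : Pt, ⟪u,p⟫ = ⟪u,q⟫ → ⟪v,p⟫ = ⟪v,q⟫ → p = q)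
    (hK : 0 < K)
    (hident : ∀ p q : Pt, (⟪u,p⟫ - ⟪u,q⟫)^2 + (⟪v,p⟫ - ⟪v,q⟫)^2 = K * dist p q ^ 2)
    (huab : ⟪u, a⟫ = ⟪u, b⟫) (hside : ∀ q ∈ Q, ⟪u, q⟫ ≤ ⟪u, a⟫)
    (hvab : ⟪v, a⟫ < ⟪v, b⟫)
    {x : Pt} (hx : x ∈ P) (hux : ⟪u, a⟫ < ⟪u, x⟫) :
    Metric.infDist x (convexHull ℝ Q) = Metric.infDist x (segment ℝ a b) := by
  have hseg_sub : segment ℝ a b ⊆ convexHull ℝ Q :=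
    (convex_convexHull ℝ Q).segment_subset (subset_convexHull ℝ _ ha) (subset_convexHull ℝ _ hb)
  refine le_antisymm (infDist_le_infDist_of_subset hseg_sub ⟨a, left_mem_segment ℝ a b⟩) ?_
  by_contra hlt
  push_neg at hlt
  obtain ⟨y, hy, hdy⟩ := (infDist_lt_iff ⟨a, subset_convexHull ℝ _ ha⟩).1 hlt
  have hdless : ∀ z ∈ segment ℝ a b, dist x y < dist x z := fun z hz =>
    lt_of_lt_of_le hdy (infDist_le_dist_of_mem hz)
  have hsy : ⟪u,y⟫ ≤ ⟪u,a⟫ := hull_le hside y hy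
  have hcmp : ∀ z, dist x y < dist x z →
      (⟪u,x⟫-⟪u,y⟫)^2 + (⟪v,x⟫-⟪v,y⟫)^2 < (⟪u,x⟫-⟪u,z⟫)^2 + (⟪v,x⟫-⟪v,z⟫)^2 := by
    intro z hz
    rw [hident, hident]
    have h2 : dist x y ^ 2 < dist x z ^ 2 := by
      exact pow_lt_pow_left₀ hz dist_nonneg two_ne_zero
    nlinarith
  have hxb : x ≠ b := by
    intro h; rw [h, ← huab] at hux; exact lt_irrefl _ hux
  have hxa : x ≠ a := by
    intro h; rw [h] at hux; exact lt_irrefl _ hux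
  rcases lt_or_ge (⟪v,b⟫) (⟪v,x⟫) with hcase | hcase
  · -- x beyond b sideways
    have hdb := hcmp b (hdless b (right_mem_segment ℝ a b))
    have hty : ⟪v,b⟫ < ⟪v,y⟫ := by
      by_contra h
      push_neg at h
      nlinarith [mul_nonneg (by linarith : (0:ℝ) ≤ ⟪u,x⟫-⟪u,a⟫) (by linarith : (0:ℝ) ≤ ⟪u,a⟫-⟪u,y⟫)]
    obtain ⟨y', hy'mem, hyseg⟩ := decomp hb ⟨a, ha, hab⟩ hy
    obtain ⟨lam, mu, hlam, hmu, hsum, heq⟩ := hyseg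
    have hteq : lam * ⟪v,b⟫ + mu * ⟪v,y'⟫ = ⟪v,y⟫ := by
      rw [← heq, inner_add_right, real_inner_smul_right, real_inner_smul_right]
    have hty' : ⟪v,b⟫ < ⟪v,y'⟫ := by
      by_contra h
      push_neg at h
      have hbb : lam * ⟪v,b⟫ + mu * ⟪v,b⟫ = ⟪v,b⟫ := by linear_combination ⟪v,b⟫ * hsum
      nlinarith [mul_nonneg hmu (by linarith : (0:ℝ) ≤ ⟪v,b⟫-⟪v,y'⟫)]
    have hsy' : ⟪u,y'⟫ ≤ ⟪u,a⟫ := hull_le (fun q hq => hside q hq.1) y' hy'mem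
    have hkey := key hdet huab hsy' hux hvab hty' hcase
    refine hconv b (hQP hb) ?_
    have hsub : ({a, y', x} : Set Pt) ⊆ convexHull ℝ (P \ {b}) := by
      rintro p (rfl | rfl | rfl)
      · exact subset_convexHull ℝ _ ⟨hQP ha, hab⟩
      · exact convexHull_mono (diff_subset_diff_left hQP) hy'mem
      · exact subset_convexHull ℝ _ ⟨hx, hxb⟩
    exact convexHull_min hsub (convex_convexHull ℝ _) hkey
  · rcases lt_or_ge (⟪v,x⟫) (⟪v,a⟫) with hcase2 | hcase2
    · -- x beyond a sideways
      have hda := hcmp a (hdless a (left_mem_segment ℝ a b))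
      have hty : ⟪v,y⟫ < ⟪v,a⟫ := by
        by_contra h
        push_neg at h
        nlinarith [mul_nonneg (by linarith : (0:ℝ) ≤ ⟪u,x⟫-⟪u,a⟫) (by linarith : (0:ℝ) ≤ ⟪u,a⟫-⟪u,y⟫)]
      obtain ⟨y', hy'mem, hyseg⟩ := decomp ha ⟨b, hb, hab.symm⟩ hy
      obtain ⟨lam, mu, hlam, hmu, hsum, heq⟩ := hyseg
      have hteq : lam * ⟪v,a⟫ + mu * ⟪v,y'⟫ = ⟪v,y⟫ := by
        rw [← heq, inner_add_right, real_inner_smul_right, real_inner_smul_right]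
      have hty' : ⟪v,y'⟫ < ⟪v,a⟫ := by
        by_contra h
        push_neg at h
        have haa : lam * ⟪v,a⟫ + mu * ⟪v,a⟫ = ⟪v,a⟫ := by linear_combination ⟪v,a⟫ * hsum
        nlinarith [mul_nonneg hmu (by linarith : (0:ℝ) ≤ ⟪v,y'⟫-⟪v,a⟫)]
      have hsy' : ⟪u,y'⟫ ≤ ⟪u,b⟫ := by
        rw [← huab]; exact hull_le (fun q hq => hside q hq.1) y' hy'mem
      have hdet' : ∀ p q : Pt, ⟪u,p⟫ = ⟪u,q⟫ → ⟪-v,p⟫ = ⟪-v,q⟫ → p = q := by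
        intro p q h1 h2
        rw [inner_neg_left, inner_neg_left, neg_inj] at h2
        exact hdet p q h1 h2
      have hkey := key hdet' huab.symm hsy' (huab ▸ hux)
        (by rw [inner_neg_left, inner_neg_left]; exact neg_lt_neg hvab)
        (by rw [inner_neg_left, inner_neg_left]; exact neg_lt_neg hty')
        (by rw [inner_neg_left, inner_neg_left]; exact neg_lt_neg hcase2)
      refine hconv a (hQP ha) ?_
      have hsub : ({b, y', x} : Set Pt) ⊆ convexHull ℝ (P \ {a}) := by
        rintro p (rfl | rfl | rfl)
        · exact subset_convexHull ℝ _ ⟨hQP hb, hab.symm⟩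
        · exact convexHull_mono (diff_subset_diff_left hQP) hy'mem
        · exact subset_convexHull ℝ _ ⟨hx, hxa⟩
      exact convexHull_min hsub (convex_convexHull ℝ _) hkey
    · -- ⟪v,a⟫ ≤ ⟪v,x⟫ ≤ ⟪v,b⟫
      have hba : (0:ℝ) < ⟪v,b⟫ - ⟪v,a⟫ := by linarith
      set c1 : ℝ := (⟪v,b⟫-⟪v,x⟫)/(⟪v,b⟫-⟪v,a⟫) with hc1
      set c2 : ℝ := (⟪v,x⟫-⟪v,a⟫)/(⟪v,b⟫-⟪v,a⟫) with hc2
      have hc10 : 0 ≤ c1 := by apply div_nonneg <;> linarith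
      have hc20 : 0 ≤ c2 := by apply div_nonneg <;> linarith
      have hcsum : c1 + c2 = 1 := by
        rw [hc1, hc2, ← add_div,
          show ⟪v,b⟫-⟪v,x⟫+(⟪v,x⟫-⟪v,a⟫) = ⟪v,b⟫-⟪v,a⟫ by ring, div_self hba.ne']
      set z : Pt := c1 • a + c2 • b with hz
      have hzseg : z ∈ segment ℝ a b := ⟨c1, c2, hc10, hc20, hcsum, rfl⟩
      have hsz : ⟪u,z⟫ = ⟪u,a⟫ := by
        rw [hz, inner_add_right, real_inner_smul_right, real_inner_smul_right, ← huab]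
        linear_combination ⟪u,a⟫ * hcsum
      have htz : ⟪v,z⟫ = ⟪v,x⟫ := by
        have hc2mul : c2 * (⟪v,b⟫-⟪v,a⟫) = ⟪v,x⟫-⟪v,a⟫ := div_mul_cancel₀ _ hba.ne'
        rw [hz, inner_add_right, real_inner_smul_right, real_inner_smul_right]
        linear_combination hc2mul + ⟪v,a⟫ * hcsum
      have := hcmp z (hdless z hzseg)
      rw [hsz, htz] at this
      nlinarith [sq_nonneg (⟪v,x⟫-⟪v,y⟫),
        mul_nonneg (by linarith : (0:ℝ) ≤ ⟪u,x⟫-⟪u,a⟫) (by linarith : (0:ℝ) ≤ ⟪u,a⟫-⟪u,y⟫)]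

theorem stmt_2 (P Q : Set Pt) (hPfin : P.Finite) (hconv : ConvexPosition P)
    (hQP : Q ⊆ P) (hQne : Q.Nonempty) (a b : Pt) (ha : a ∈ Q) (hb : b ∈ Q)
    (hab : a ≠ b) (u : Pt) (hu : u ≠ 0) (huab : ⟪u, a⟫ = ⟪u, b⟫)
    (hside : ∀ q ∈ Q, ⟪u, q⟫ ≤ ⟪u, a⟫) :
    ∀ x ∈ P, ⟪u, a⟫ < ⟪u, x⟫ →
      Metric.infDist x (convexHull ℝ Q) = Metric.infDist x (segment ℝ a b) := by
  intro x hx hux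
  set v : Pt := (WithLp.equiv 2 (Fin 2 → ℝ)).symm ![-(u 1), u 0] with hv
  have hv0 : v 0 = -(u 1) := rfl
  have hv1 : v 1 = u 0 := rfl
  have hdet : ∀ p q : Pt, ⟪u,p⟫ = ⟪u,q⟫ → ⟪v,p⟫ = ⟪v,q⟫ → p = q :=
    fun p q h1 h2 => det_eq hv0 hv1 hu h1 h2
  have hK : 0 < u 0 ^ 2 + u 1 ^ 2 := by
    rcases eq_or_ne (u 0) 0 with h0 | h0
    · have h1' : u 1 ≠ 0 := by
        intro h1'
        exact hu (by ext i; fin_cases i <;> simp [h0, h1'])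
      positivity
    · positivity
  have hident := dist_identity hv0 hv1
  rcases lt_trichotomy (⟪v,a⟫) (⟪v,b⟫) with hvab | hvab | hvab
  · exact aux hconv hQP ha hb hab hdet hK hident huab hside hvab hx hux
  · exact absurd (hdet a b huab hvab) hab
  · rw [segment_symm]
    exact aux hconv hQP hb ha hab.symm hdet hK hident huab.symm
      (fun q hq => le_of_le_of_eq (hside q hq) huab) hvab hx (huab ▸ hux)
end

section
/- Let p : Fin n → ℝ² be a clockwise enumeration of a set P in convex position, and let l₁ < l₂ < … < l_k (in the natural linear order of Fin n) with k ≥ 2, Q := {p l₁, …, p l_k}, and set l_{k+1} := l₁. Then cost(Q, P) = max_{1 ≤ t ≤ k} cost₀(l_t, l_{t+1}). -/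
open Set Metric

/-- The planar determinant `det(u,v) = u₁·v₂ − u₂·v₁`. -/
def detv (u v : Pt) : ℝ := u 0 * v 1 - u 1 * v 0

/-- `cost0 p i j` : the maximum distance to the segment `[p i, p j]` among the points
`p v` with `v` clockwise between `i` and `j` (clockwise offsets measured by `Fin`
subtraction, i.e. `(x - i) mod n`). -/
noncomputable def cost0 {n : ℕ} (p : Fin n → Pt) (i j : Fin n) : ℝ :=
  sSup ((fun v => Metric.infDist (p v) (segment ℝ (p i) (p j))) ''
    {v : Fin n | v - i ≤ j - i})


/- Auxiliary lemmas -/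

lemma sub_val' {n : ℕ} (i x : Fin n) :
    (x - i).val = if i.val ≤ x.val then x.val - i.val else x.val + n - i.val := by
  have hi := i.isLt; have hx := x.isLt
  rw [Fin.sub_def]
  simp only
  rcases le_or_gt i.val x.val with h | h
  · rw [if_pos h]
    have : n - i.val + x.val = (x.val - i.val) + n := by omega
    rw [this, Nat.add_mod_right, Nat.mod_eq_of_lt (by omega)]
  · rw [if_neg (by omega), Nat.mod_eq_of_lt (by omega)]; omega

lemma detv_cyc (a b c : Pt) : detv (b - a) (c - a) = detv (c - b) (a - b) := by
  simp [detv, PiLp.sub_apply]; ring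

lemma detv_neg (a b c : Pt) : detv (b - a) (c - a) = -detv (c - a) (b - a) := by
  simp [detv, PiLp.sub_apply]; ring

lemma detv_flip (a b x : Pt) : detv (b - x) (a - x) = -detv (b - a) (x - a) := by
  simp [detv, PiLp.sub_apply]; ring

lemma detv_self (u v : Pt) : detv u (v - v) = 0 := by
  simp [detv, PiLp.sub_apply]

lemma cw3 {n : ℕ} {p : Fin n → Pt}
    (hcw : ∀ i j l : Fin n, i < j → j < l → detv (p j - p i) (p l - p i) < 0)
    (i j l : Fin n) (h1 : 0 < (j - i).val) (h2 : (j - i).val < (l - i).val) :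
    detv (p j - p i) (p l - p i) < 0 := by
  have hi := i.isLt; have hj := j.isLt; have hl := l.isLt
  rw [sub_val' i j] at h1
  rw [sub_val' i j, sub_val' i l] at h2
  split_ifs at h1 h2 with c1 c2
  · -- i ≤ j, i ≤ l : then i < j < l
    exact hcw i j l (by rw [Fin.lt_def]; omega) (by rw [Fin.lt_def]; omega)
  · -- i ≤ j, ¬ i ≤ l : l < i < j
    rw [detv_cyc, detv_cyc]
    exact hcw l i j (by rw [Fin.lt_def]; omega) (by rw [Fin.lt_def]; omega)
  · -- ¬ i ≤ j, i ≤ l : contradiction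
    omega
  · -- ¬ i ≤ j, ¬ i ≤ l : j < l < i
    rw [detv_cyc]
    exact hcw j l i (by rw [Fin.lt_def]; omega) (by rw [Fin.lt_def]; omega)

lemma delta_cancel {n : ℕ} (i v w : Fin n) (h : (v - i).val ≤ (w - i).val) :
    (w - v).val = (w - i).val - (v - i).val := by
  have hi := i.isLt; have hv := v.isLt; have hw := w.isLt
  rw [sub_val' i v, sub_val' i w] at h
  rw [sub_val' v w, sub_val' i w, sub_val' i v]
  split_ifs at h ⊢ <;> omega

lemma detv_id (u : Pt) : detv u u = 0 := by
  simp [detv]; ring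

lemma key_s3 (a b x y : Pt) (hD : 0 < detv (b - a) (x - a))
    (h1 : detv (b - a) (y - a) ≤ 0) (h2 : detv (b - x) (y - x) ≤ 0)
    (h3 : detv (x - a) (y - a) ≤ 0) :
    Metric.infDist x (segment ℝ a b) ≤ dist x y := by
  simp only [detv, PiLp.sub_apply] at hD h1 h2 h3
  set f0 : ℝ := (b 0 - a 0) * (x 1 - a 1) - (b 1 - a 1) * (x 0 - a 0) with hf0
  set f1 : ℝ := (b 0 - a 0) * (y 1 - a 1) - (b 1 - a 1) * (y 0 - a 0) with hf1
  have hden : 0 < f0 - f1 := by linarith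
  set t : ℝ := f0 / (f0 - f1) with ht
  have ht0 : 0 < t := div_pos hD hden
  have ht1 : t ≤ 1 := by rw [div_le_one hden]; linarith
  set w : Pt := x + t • (y - x) with hw
  have hw0 : w 0 = x 0 + t * (y 0 - x 0) := by
    simp [hw, PiLp.add_apply, PiLp.smul_apply, PiLp.sub_apply]
  have hw1 : w 1 = x 1 + t * (y 1 - x 1) := by
    simp [hw, PiLp.add_apply, PiLp.smul_apply, PiLp.sub_apply]
  have hcross : (b 0 - a 0) * (w 1 - a 1) - (b 1 - a 1) * (w 0 - a 0) = 0 := by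
    have e : (b 0 - a 0) * (w 1 - a 1) - (b 1 - a 1) * (w 0 - a 0) = f0 + t * (f1 - f0) := by
      rw [hw0, hw1, hf0, hf1]; ring
    rw [e, ht]; field_simp; ring
  have hw2 : (b 0 - x 0) * (w 1 - x 1) - (b 1 - x 1) * (w 0 - x 0) ≤ 0 := by
    have e : (b 0 - x 0) * (w 1 - x 1) - (b 1 - x 1) * (w 0 - x 0)
        = t * ((b 0 - x 0) * (y 1 - x 1) - (b 1 - x 1) * (y 0 - x 0)) := by
      rw [hw0, hw1]; ring
    rw [e]; exact mul_nonpos_of_nonneg_of_nonpos ht0.le h2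
  have hw3 : (x 0 - a 0) * (w 1 - a 1) - (x 1 - a 1) * (w 0 - a 0) ≤ 0 := by
    have e : (x 0 - a 0) * (w 1 - a 1) - (x 1 - a 1) * (w 0 - a 0)
        = t * ((x 0 - a 0) * (y 1 - a 1) - (x 1 - a 1) * (y 0 - a 0)) := by
      rw [hw0, hw1]; ring
    rw [e]; exact mul_nonpos_of_nonneg_of_nonpos ht0.le h3
  -- extract s with w - a = s • (b - a)
  obtain ⟨s, hs0, hs1⟩ : ∃ s : ℝ, w 0 - a 0 = s * (b 0 - a 0) ∧ w 1 - a 1 = s * (b 1 - a 1) := by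
    rcases eq_or_ne (b 0 - a 0) 0 with h | h
    · have hne : b 1 - a 1 ≠ 0 := by
        intro h'
        have : f0 = 0 := by
          rw [hf0]; linear_combination (x 1 - a 1) * h - (x 0 - a 0) * h'
        linarith
      refine ⟨(w 1 - a 1) / (b 1 - a 1), ?_, by field_simp⟩
      rw [h] at hcross ⊢
      have : (b 1 - a 1) * (w 0 - a 0) = 0 := by linarith
      have := mul_eq_zero.1 this
      simp [hne] at this
      simp [this]
    · refine ⟨(w 0 - a 0) / (b 0 - a 0), by field_simp, ?_⟩
      field_simp
      linarith [hcross]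
  have e3 : (x 0 - a 0) * (w 1 - a 1) - (x 1 - a 1) * (w 0 - a 0) = -(s * f0) := by
    rw [hf0]; linear_combination (x 0 - a 0) * hs1 - (x 1 - a 1) * hs0
  have e2 : (b 0 - x 0) * (w 1 - x 1) - (b 1 - x 1) * (w 0 - x 0) = (s - 1) * f0 := by
    rw [hf0]; linear_combination (b 0 - x 0) * hs1 - (b 1 - x 1) * hs0
  have hsge : 0 ≤ s := by
    have h' : 0 * f0 ≤ s * f0 := by rw [e3] at hw3; linarith
    exact le_of_mul_le_mul_right h' hD
  have hsle : s ≤ 1 := by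
    by_contra hcon
    have : 0 < (s - 1) * f0 := mul_pos (by linarith) hD
    rw [e2] at hw2; linarith
  have hweq : a + s • (b - a) = w := by
    have q0 : (a + s • (b - a)) 0 = w 0 := by
      simp only [PiLp.add_apply, PiLp.smul_apply, PiLp.sub_apply, smul_eq_mul]; linarith
    have q1 : (a + s • (b - a)) 1 = w 1 := by
      simp only [PiLp.add_apply, PiLp.smul_apply, PiLp.sub_apply, smul_eq_mul]; linarith
    ext i
    fin_cases i
    · exact q0
    · exact q1
  have hwseg : w ∈ segment ℝ a b := by
    rw [segment_eq_image']
    exact ⟨s, ⟨hsge, hsle⟩, hweq⟩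
  have hdist : dist x w ≤ dist x y := by
    rw [dist_eq_norm, dist_eq_norm, hw]
    have e : x - (x + t • (y - x)) = (-t) • (y - x) := by module
    rw [e, norm_smul]
    simp only [norm_neg, Real.norm_eq_abs, abs_of_pos ht0]
    calc t * ‖y - x‖ ≤ 1 * ‖y - x‖ := by
          exact mul_le_mul_of_nonneg_right ht1 (norm_nonneg _)
      _ = ‖x - y‖ := by rw [one_mul, norm_sub_rev]
  exact le_trans (Metric.infDist_le_dist_of_mem hwseg) hdist

lemma halfplane_convex (c d : Pt) : Convex ℝ {y : Pt | detv c (y - d) ≤ 0} := by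
  intro y hy z hz α β hα hβ hαβ
  have hβ' : β = 1 - α := by linarith
  subst hβ'
  simp only [mem_setOf_eq, detv, PiLp.sub_apply, PiLp.add_apply, PiLp.smul_apply,
    smul_eq_mul] at hy hz ⊢
  nlinarith [mul_nonpos_of_nonneg_of_nonpos hα hy, mul_nonpos_of_nonneg_of_nonpos hβ hz]

lemma hull_eq (Q : Set Pt) (a b x : Pt) (ha : a ∈ Q) (hb : b ∈ Q)
    (hD : 0 < detv (b - a) (x - a))
    (hQ : ∀ q ∈ Q, detv (b - a) (q - a) ≤ 0 ∧ detv (b - x) (q - x) ≤ 0 ∧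
      detv (x - a) (q - a) ≤ 0) :
    Metric.infDist x (convexHull ℝ Q) = Metric.infDist x (segment ℝ a b) := by
  have hsub : segment ℝ a b ⊆ convexHull ℝ Q :=
    (convex_convexHull ℝ Q).segment_subset (subset_convexHull ℝ Q ha) (subset_convexHull ℝ Q hb)
  refine le_antisymm (Metric.infDist_le_infDist_of_subset hsub ⟨a, left_mem_segment ℝ a b⟩) ?_
  by_contra hlt
  push_neg at hlt
  obtain ⟨y, hy, hdy⟩ := (Metric.infDist_lt_iff ⟨a, subset_convexHull ℝ Q ha⟩).1 hlt
  have r1 : convexHull ℝ Q ⊆ {z | detv (b - a) (z - a) ≤ 0} :=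
    convexHull_min (fun q hq => (hQ q hq).1) (halfplane_convex _ _)
  have r2 : convexHull ℝ Q ⊆ {z | detv (b - x) (z - x) ≤ 0} :=
    convexHull_min (fun q hq => (hQ q hq).2.1) (halfplane_convex _ _)
  have r3 : convexHull ℝ Q ⊆ {z | detv (x - a) (z - a) ≤ 0} :=
    convexHull_min (fun q hq => (hQ q hq).2.2) (halfplane_convex _ _)
  have := key_s3 a b x y hD (r1 hy) (r2 hy) (r3 hy)
  linarith

theorem stmt_3 (n k : ℕ) (hk : 2 ≤ k) (p : Fin n → Pt)
    (hinj : Function.Injective p)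
    (hcw : ∀ i j l : Fin n, i < j → j < l → detv (p j - p i) (p l - p i) < 0)
    (ℓ : Fin k → Fin n) (hmono : StrictMono ℓ) :
    cost (p '' Set.range ℓ) (Set.range p) =
      sSup (Set.range fun t : Fin k => cost0 p (ℓ t) (ℓ (t + ⟨1, by omega⟩))) := by
  have hk0 : 0 < k := by omega
  set one : Fin k := ⟨1, by omega⟩ with hone_def
  have hn0 : 0 < n := (ℓ ⟨0, hk0⟩).pos
  set Q : Set Pt := p '' Set.range ℓ with hQdef
  set H : Set Pt := convexHull ℝ Q with hHdef
  have mono' : ∀ s1 s2 : Fin k, s1.val < s2.val → (ℓ s1).val < (ℓ s2).val := by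
    intro s1 s2 h
    exact Fin.lt_def.1 (hmono (Fin.lt_def.2 h))
  have hone : ∀ t : Fin k, (t + one).val = if t.val + 1 < k then t.val + 1 else 0 := by
    intro t
    have ht := t.isLt
    rw [Fin.add_def]
    simp only [hone_def]
    split_ifs with h
    · exact Nat.mod_eq_of_lt h
    · have : t.val + 1 = k := by omega
      rw [this, Nat.mod_self]
  -- t + one ≠ t
  have hne_tone : ∀ t : Fin k, ℓ (t + one) ≠ ℓ t := by
    intro t h
    have := hmono.injective h
    have h2 := hone t
    rw [this] at h2
    split_ifs at h2 <;> omega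
  -- complement: points of ℓ outside the open arc
  have hout : ∀ t s : Fin k, s ≠ t → s ≠ t + one →
      (ℓ (t + one) - ℓ t).val < (ℓ s - ℓ t).val := by
    intro t s hst hst1
    have h1 := hone t
    have hst' : s.val ≠ t.val := fun h => hst (Fin.ext h)
    have hst1' : s.val ≠ (t + one).val := fun h => hst1 (Fin.ext h)
    have hi := (ℓ t).isLt; have hj := (ℓ (t + one)).isLt; have hu := (ℓ s).isLt
    rw [sub_val', sub_val']
    split_ifs at h1 with hc
    · -- no wrap : (t+one).val = t.val + 1
      rcases lt_or_gt_of_ne hst' with h | h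
      · have e1 : (ℓ s).val < (ℓ t).val := mono' s t h
        have e2 : (ℓ t).val < (ℓ (t + one)).val := mono' t (t + one) (by omega)
        split_ifs <;> omega
      · have h' : (t + one).val < s.val := by omega
        have e1 : (ℓ (t + one)).val < (ℓ s).val := mono' (t + one) s h'
        have e2 : (ℓ t).val < (ℓ (t + one)).val := mono' t (t + one) (by omega)
        split_ifs <;> omega
    · -- wrap : t is last, (t+one).val = 0
      have hs0 : 0 < s.val := by omega
      have hst2 : s.val < t.val := by omega
      have e1 : (ℓ (t + one)).val < (ℓ s).val := mono' (t + one) s (by omega)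
      have e2 : (ℓ s).val < (ℓ t).val := mono' s t hst2
      split_ifs <;> omega
  -- covering
  have hcov : ∀ v : Fin n, ∃ t : Fin k, (v - ℓ t).val ≤ (ℓ (t + one) - ℓ t).val := by
    intro v
    set last : Fin k := ⟨k - 1, by omega⟩ with hlast_def
    have hlast1 : (last + one).val = 0 := by
      rw [hone]; simp only [hlast_def]; split_ifs <;> omega
    have hv := v.isLt
    by_cases hcase : (ℓ last).val ≤ v.val ∨ v.val < (ℓ ⟨0, hk0⟩).val
    · refine ⟨last, ?_⟩
      have hlow : (ℓ (last + one)).val < (ℓ last).val := by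
        apply mono'; rw [hlast1]; show (0:ℕ) < k - 1; omega
      have h0eq : (ℓ (last + one)).val = (ℓ ⟨0, hk0⟩).val := by
        congr 2; exact Fin.ext hlast1
      have hj := (ℓ (last + one)).isLt
      rw [sub_val', sub_val']
      rcases hcase with h | h <;> split_ifs <;> omega
    · push_neg at hcase
      obtain ⟨hv1, hv2⟩ := hcase
      set T : Finset (Fin k) := Finset.univ.filter (fun s => (ℓ s).val ≤ v.val) with hT
      have hTne : T.Nonempty := ⟨⟨0, hk0⟩, by simp [hT]; omega⟩
      set t : Fin k := T.max' hTne with ht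
      have htmem : (ℓ t).val ≤ v.val := by
        have := T.max'_mem hTne
        simp [hT] at this
        exact this
      have htlast : t.val + 1 < k := by
        rcases Nat.lt_or_ge (t.val + 1) k with h | h
        · exact h
        · exfalso
          have : t = last := Fin.ext (by simp [hlast_def]; omega)
          rw [this] at htmem; omega
      have htone : (t + one).val = t.val + 1 := by rw [hone]; split_ifs <;> omega
      have hnot : v.val < (ℓ (t + one)).val := by
        by_contra hcon
        push_neg at hcon
        have hmem : t + one ∈ T := by simp [hT]; omega
        have := T.le_max' _ hmem
        rw [← ht] at this
        have := Fin.le_def.1 this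
        omega
      have e2 : (ℓ t).val < (ℓ (t + one)).val := mono' t (t + one) (by omega)
      refine ⟨t, ?_⟩
      rw [sub_val', sub_val']
      split_ifs <;> omega
  -- the key equality
  have keyEq : ∀ (t : Fin k) (v : Fin n), (v - ℓ t).val ≤ (ℓ (t + one) - ℓ t).val →
      Metric.infDist (p v) H = Metric.infDist (p v) (segment ℝ (p (ℓ t)) (p (ℓ (t + one)))) := by
    intro t v hv
    set i := ℓ t with hi_def
    set j := ℓ (t + one) with hj_def
    have hiQ : p i ∈ Q := ⟨i, ⟨t, rfl⟩, rfl⟩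
    have hjQ : p j ∈ Q := ⟨j, ⟨t + one, rfl⟩, rfl⟩
    by_cases hvi : v = i
    · rw [hvi, Metric.infDist_zero_of_mem (subset_convexHull ℝ Q hiQ),
        Metric.infDist_zero_of_mem (left_mem_segment ℝ _ _)]
    by_cases hvj : v = j
    · rw [hvj, Metric.infDist_zero_of_mem (subset_convexHull ℝ Q hjQ),
        Metric.infDist_zero_of_mem (right_mem_segment ℝ _ _)]
    -- strict interior
    have hii := i.isLt; have hjj := j.isLt; have hvv := v.isLt
    have h1 : 0 < (v - i).val := by
      rcases Nat.eq_zero_or_pos (v - i).val with h | h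
      · exfalso; apply hvi; apply Fin.ext
        rw [sub_val'] at h; split_ifs at h <;> omega
      · exact h
    have h2 : (v - i).val < (j - i).val := by
      rcases Nat.lt_or_ge (v - i).val (j - i).val with h | h
      · exact h
      · exfalso; apply hvj; apply Fin.ext
        have heq : (v - i).val = (j - i).val := by omega
        rw [sub_val', sub_val'] at heq; split_ifs at heq <;> omega
    have hD : 0 < detv (p j - p i) (p v - p i) := by
      have := cw3 hcw i v j h1 h2
      rw [detv_neg] at this
      linarith
    apply hull_eq Q (p i) (p j) (p v) hiQ hjQ hD
    rintro q ⟨w, ⟨s, rfl⟩, rfl⟩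
    by_cases hs1 : s = t
    · subst hs1
      exact ⟨le_of_eq (detv_self _ _), by rw [detv_flip]; linarith, le_of_eq (detv_self _ _)⟩
    by_cases hs2 : s = t + one
    · subst hs2
      exact ⟨le_of_eq (detv_id _), le_of_eq (detv_id _), (cw3 hcw i v j h1 h2).le⟩
    · have h5 : (j - i).val < (ℓ s - i).val := hout t s hs1 hs2
      have e1 := delta_cancel i v j (le_of_lt h2)
      have e2 := delta_cancel i v (ℓ s) (by omega)
      exact ⟨(cw3 hcw i j (ℓ s) (by omega) h5).le,
        (cw3 hcw v j (ℓ s) (by omega) (by omega)).le,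
        (cw3 hcw i v (ℓ s) h1 (by omega)).le⟩
  -- final assembly
  have hAbdd : BddAbove ((fun q => Metric.infDist q H) '' Set.range p) :=
    (Set.Finite.image _ (Set.finite_range p)).bddAbove
  have hNEn : Nonempty (Fin n) := ⟨⟨0, hn0⟩⟩
  unfold cost
  apply le_antisymm
  · apply csSup_le ((Set.range_nonempty p).image _)
    rintro r ⟨q, ⟨v, rfl⟩, rfl⟩
    obtain ⟨t, htv⟩ := hcov v
    have hseg : segment ℝ (p (ℓ t)) (p (ℓ (t + one))) ⊆ H :=
      (convex_convexHull ℝ Q).segment_subset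
        (subset_convexHull ℝ Q ⟨_, ⟨t, rfl⟩, rfl⟩)
        (subset_convexHull ℝ Q ⟨_, ⟨t + one, rfl⟩, rfl⟩)
    have step1 : Metric.infDist (p v) H ≤
        Metric.infDist (p v) (segment ℝ (p (ℓ t)) (p (ℓ (t + one)))) :=
      Metric.infDist_le_infDist_of_subset hseg ⟨_, left_mem_segment ℝ _ _⟩
    have step2 : Metric.infDist (p v) (segment ℝ (p (ℓ t)) (p (ℓ (t + one)))) ≤
        cost0 p (ℓ t) (ℓ (t + one)) := by
      unfold cost0
      apply le_csSup ((Set.Finite.image _ (Set.toFinite _)).bddAbove)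
      exact ⟨v, Fin.le_def.2 htv, rfl⟩
    have step3 : cost0 p (ℓ t) (ℓ (t + one)) ≤
        sSup (Set.range fun t : Fin k => cost0 p (ℓ t) (ℓ (t + one))) :=
      le_csSup (Set.finite_range _).bddAbove ⟨t, rfl⟩
    linarith
  · have hNEk : Nonempty (Fin k) := ⟨⟨0, hk0⟩⟩
    apply csSup_le (Set.range_nonempty _)
    rintro r ⟨t, rfl⟩
    unfold cost0
    apply csSup_le
    · refine ⟨_, ⟨ℓ t, ?_, rfl⟩⟩
      show ℓ t - ℓ t ≤ ℓ (t + one) - ℓ t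
      rw [Fin.le_def, sub_val', sub_val']
      have := (ℓ t).isLt; have := (ℓ (t + one)).isLt
      split_ifs <;> omega
    · rintro r ⟨v, hv, rfl⟩
      dsimp only
      rw [← keyEq t v (Fin.le_def.1 hv)]
      exact le_csSup hAbdd ⟨p v, ⟨v, rfl⟩, rfl⟩
end

section
/- Let p : Fin n → ℝ² be a clockwise enumeration of a set P in convex position and let k be an integer with 2 ≤ k ≤ n. Then the optimal value of the min-ε problem is a critical value: there exist indices i, j ∈ Fin n such that min{ cost(Q,P) : Q ⊆ P, Q ≠ ∅, |Q| ≤ k } = cost₀(i,j). -/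
open Set Metric

namespace Aux

noncomputable def Dq (a b c : Pt) : ℝ := detv (b - a) (c - a)

lemma Dq_rot (a b c : Pt) : Dq a b c = Dq b c a := by
  simp only [Dq, detv, PiLp.sub_apply]; ring

lemma Dq_swap (a b c : Pt) : Dq a b c = - Dq a c b := by
  simp only [Dq, detv, PiLp.sub_apply]; ring

lemma Dq_self₁ (a b : Pt) : Dq a b a = 0 := by
  simp only [Dq, detv, PiLp.sub_apply]; ring

lemma Dq_self₂ (a b : Pt) : Dq a b b = 0 := by
  simp only [Dq, detv, PiLp.sub_apply]; ring

lemma Dq_affine (a b u z : Pt) (t : ℝ) :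
    Dq a b (u + t • z) = Dq a b u + t * detv (b - a) z := by
  simp only [Dq, detv, PiLp.sub_apply, PiLp.add_apply, PiLp.smul_apply, smul_eq_mul]; ring

lemma detv_line (a b x y : Pt) : detv (b - a) (y - x) = Dq a b y - Dq a b x := by
  simp only [Dq, detv, PiLp.sub_apply]; ring

lemma convex_halfplane (a b : Pt) : Convex ℝ {z : Pt | Dq a b z ≤ 0} := by
  intro x hx y hy s t hs ht hst
  have hx' : Dq a b x ≤ 0 := hx
  have hy' : Dq a b y ≤ 0 := hy
  have ht' : t = 1 - s := by linarith
  subst ht'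
  have key : Dq a b (s • x + (1 - s) • y) = s * Dq a b x + (1 - s) * Dq a b y := by
    simp only [Dq, detv, PiLp.add_apply, PiLp.sub_apply, PiLp.smul_apply, smul_eq_mul]; ring
  show Dq a b _ ≤ 0
  rw [key]
  have := mul_nonpos_of_nonneg_of_nonpos hs hx'
  have := mul_nonpos_of_nonneg_of_nonpos ht hy'
  linarith

lemma detv_zero_parallel {u v : Pt} (hu : u ≠ 0) (h : detv u v = 0) : ∃ t : ℝ, v = t • u := by
  have h01 : u 0 ≠ 0 ∨ u 1 ≠ 0 := by
    by_contra hc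
    push_neg at hc
    apply hu
    ext i
    fin_cases i
    · exact hc.1
    · exact hc.2
  simp only [detv] at h
  rcases h01 with h0 | h1
  · refine ⟨v 0 / u 0, ?_⟩
    ext i
    fin_cases i <;> simp only [PiLp.smul_apply, smul_eq_mul, Fin.zero_eta, Fin.mk_one] <;> field_simp <;> linarith
  · refine ⟨v 1 / u 1, ?_⟩
    ext i
    fin_cases i <;> simp only [PiLp.smul_apply, smul_eq_mul, Fin.zero_eta, Fin.mk_one] <;> field_simp <;> linarith

/-- Closed form for `Fin` subtraction values. -/
lemma fsub_val {n : ℕ} (x y : Fin n) :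
    (x - y).val = if y.val ≤ x.val then x.val - y.val else x.val + n - y.val := by
  have hx := x.isLt
  have hy := y.isLt
  rw [Fin.sub_def]
  show (n - y.val + x.val) % n = _
  split_ifs with h
  · rw [show n - y.val + x.val = n + (x.val - y.val) by omega, Nat.add_mod_left,
      Nat.mod_eq_of_lt (by omega)]
  · rw [Nat.mod_eq_of_lt (by omega)]; omega

lemma fin_eq_of_val_sub_eq {n : ℕ} [NeZero n] {x y z : Fin n} (h : (x - z).val = (y - z).val) :
    x = y := by
  have : x - z = y - z := Fin.val_inj.mp h
  exact sub_left_inj.mp this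

lemma fin_eq_of_val_sub_eq' {n : ℕ} [NeZero n] {x y z : Fin n} (h : (z - x).val = (z - y).val) :
    x = y := by
  have : z - x = z - y := Fin.val_inj.mp h
  exact sub_right_inj.mp this

lemma fsub_val_pos {n : ℕ} [NeZero n] {x y : Fin n} (h : x ≠ y) : 0 < (x - y).val := by
  rcases Nat.eq_zero_or_pos (x - y).val with h0 | h1
  · exfalso
    have : x - y = 0 := Fin.val_inj.mp (by simpa using h0)
    exact h (sub_eq_zero.mp this)
  · exact h1

end Aux

namespace Aux

variable {n : ℕ} {p : Fin n → Pt}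

/-- Cyclic clockwise triples have negative determinant. -/
lemma cyc (hcw : ∀ i j l : Fin n, i < j → j < l → detv (p j - p i) (p l - p i) < 0)
    {a b c : Fin n} (h1 : 0 < (b - a).val) (h2 : (b - a).val < (c - a).val) :
    Dq (p a) (p b) (p c) < 0 := by
  haveI : NeZero n := ⟨(Fin.pos a).ne'⟩
  have hab : a ≠ b := by
    rintro rfl; rw [sub_self] at h1; simp at h1
  have hca : (0:ℕ) < (c - a).val := lt_trans h1 h2
  have hac : a ≠ c := by
    rintro rfl; rw [sub_self] at hca; simp at hca
  have hbc : b ≠ c := by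
    rintro rfl; exact lt_irrefl _ h2
  have hval : ∀ x y : Fin n, x ≠ y → x.val ≠ y.val := fun x y h hh => h (Fin.val_inj.mp hh)
  have hA := a.isLt
  have hB := b.isLt
  have hC := c.isLt
  simp only [fsub_val] at h1 h2
  rcases (hval _ _ hab).lt_or_gt with hab' | hab' <;>
  rcases (hval _ _ hac).lt_or_gt with hac' | hac' <;>
  rcases (hval _ _ hbc).lt_or_gt with hbc' | hbc'
  · exact hcw a b c (Fin.lt_def.mpr hab') (Fin.lt_def.mpr hbc')
  · exfalso; split_ifs at h1 h2 <;> omega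
  · exfalso; split_ifs at h1 h2 <;> omega
  · rw [Dq_rot, Dq_rot]
    exact hcw c a b (Fin.lt_def.mpr hac') (Fin.lt_def.mpr hab')
  · exfalso; split_ifs at h1 h2 <;> omega
  · exfalso; split_ifs at h1 h2 <;> omega
  · rw [Dq_rot]
    exact hcw b c a (Fin.lt_def.mpr hbc') (Fin.lt_def.mpr hac')
  · exfalso; split_ifs at h1 h2 <;> omega

end Aux

namespace Aux

variable {n : ℕ} {p : Fin n → Pt}

lemma succ_sub_val [NeZero n] (hn : 2 ≤ n) (a : Fin n) : (a + 1 - a).val = 1 := by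
  rw [add_sub_cancel_left, Fin.val_one']
  exact Nat.mod_eq_of_lt (by omega)

lemma one_lt_sub [NeZero n] (hn : 2 ≤ n) {a b : Fin n} (h1 : b ≠ a) (h2 : b ≠ a + 1) :
    1 < (b - a).val := by
  have hpos := fsub_val_pos h1
  rcases Nat.lt_or_ge 1 (b - a).val with h | h
  · exact h
  · exfalso
    have hv : (b - a).val = 1 := by omega
    have : b - a = 1 := Fin.val_inj.mp (by rw [hv, Fin.val_one', Nat.mod_eq_of_lt (show 1 < n by omega)])
    exact h2 (by rw [sub_eq_iff_eq_add] at this; rw [this, add_comm])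

lemma succ_ne_pred [NeZero n] (hn3 : 3 ≤ n) (j : Fin n) : j + 1 ≠ j - 1 := by
  intro h
  have h1 : (1 : Fin n) = -1 := by
    calc (1 : Fin n) = j + 1 - j := (add_sub_cancel_left j 1).symm
    _ = j - 1 - j := by rw [h]
    _ = -1 := sub_sub_cancel_left j 1
  have h2 : (1 : Fin n) = 0 - 1 := by rw [zero_sub]; exact h1
  have h3 := congrArg Fin.val h2
  rw [fsub_val, if_neg (by simp [Fin.val_one', Nat.mod_eq_of_lt (show 1 < n by omega)])] at h3
  simp only [Fin.val_one', Nat.mod_eq_of_lt (show 1 < n by omega)] at h3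
  simp only [Fin.val_zero] at h3
  omega

set_option maxHeartbeats 1000000 in
/-- The key geometric lemma: if `i, j` are consecutive vertices of `Q` (in the
clockwise order) and `v` lies clockwise between them, then the distance of `p v`
to the segment `[p i, p j]` is at most its distance to the hull of `Q`. -/
lemma key (hinj : Function.Injective p)
    (hcw : ∀ i j l : Fin n, i < j → j < l → detv (p j - p i) (p l - p i) < 0)
    {Q : Set Pt} (hQ : Q ⊆ Set.range p) {i j : Fin n} (hij : i ≠ j)
    (hiQ : p i ∈ Q) (hjQ : p j ∈ Q)
    (hcons : ∀ q : Fin n, p q ∈ Q → (q - i).val ≤ (j - i).val → q = i ∨ q = j)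
    {v : Fin n} (hv : (v - i).val ≤ (j - i).val) :
    Metric.infDist (p v) (segment ℝ (p i) (p j)) ≤ Metric.infDist (p v) (convexHull ℝ Q) := by
  haveI : NeZero n := ⟨(Fin.pos i).ne'⟩
  by_cases hvi : v = i
  · rw [hvi, infDist_zero_of_mem (left_mem_segment ℝ (p i) (p j))]
    exact infDist_nonneg
  by_cases hvj : v = j
  · rw [hvj, infDist_zero_of_mem (right_mem_segment ℝ (p i) (p j))]
    exact infDist_nonneg
  have hv1 : 0 < (v - i).val := fsub_val_pos hvi
  have hv2 : (v - i).val < (j - i).val :=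
    lt_of_le_of_ne hv (fun h => hvj (fin_eq_of_val_sub_eq h))
  have hn3 : 3 ≤ n := by
    have := (j - i).isLt
    omega
  have hn2 : 2 ≤ n := by omega
  set w : Pt := p j - p i with hwdef
  have hw : w ≠ 0 := sub_ne_zero.mpr (fun h => hij (hinj h).symm)
  -- all of `Q` is (weakly) on the non-positive side of the oriented line through `p i, p j`
  have hQs : ∀ x ∈ convexHull ℝ Q, Dq (p i) (p j) x ≤ 0 := by
    intro x hx
    refine convexHull_min ?_ (convex_halfplane (p i) (p j)) hx
    intro z hz
    obtain ⟨q, rfl⟩ := hQ hz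
    show Dq (p i) (p j) (p q) ≤ 0
    rcases le_or_gt ((q - i).val) ((j - i).val) with h | h
    · rcases hcons q hz h with rfl | rfl
      · rw [Dq_self₁]
      · rw [Dq_self₂]
    · exact le_of_lt (cyc hcw (fsub_val_pos (Ne.symm hij)) h)
  -- every edge `(a, a+1)` supports the hull of all points
  have hPe : ∀ a : Fin n, ∀ x ∈ convexHull ℝ (Set.range p), Dq (p a) (p (a + 1)) x ≤ 0 := by
    intro a x hx
    refine convexHull_min ?_ (convex_halfplane (p a) (p (a + 1))) hx
    rintro z ⟨b, rfl⟩
    show Dq (p a) (p (a + 1)) (p b) ≤ 0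
    by_cases hba : b = a
    · rw [hba, Dq_self₁]
    by_cases hba1 : b = a + 1
    · rw [hba1, Dq_self₂]
    refine le_of_lt (cyc hcw ?_ ?_)
    · rw [succ_sub_val hn2]
      omega
    · rw [succ_sub_val hn2]
      exact one_lt_sub hn2 hba hba1
  -- `p v` is strictly on the positive side
  have hsv : 0 < Dq (p i) (p j) (p v) := by
    have h := cyc hcw (a := i) (b := v) (c := j) hv1 hv2
    have hsw := Dq_swap (p i) (p j) (p v)
    rw [Dq_swap] at h
    linarith [h, hsw]
  -- reduce to a pointwise bound over the hull
  have hQne : (convexHull ℝ Q).Nonempty := ⟨p i, subset_convexHull ℝ Q hiQ⟩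
  haveI := hQne.to_subtype
  rw [Metric.infDist_eq_iInf (s := convexHull ℝ Q)]
  refine le_ciInf ?_
  rintro ⟨x, hx⟩
  simp only
  set sv : ℝ := Dq (p i) (p j) (p v) with hsvdef
  have hsx : Dq (p i) (p j) x ≤ 0 := hQs x hx
  have hd : 0 < sv - Dq (p i) (p j) x := by linarith
  set t' : ℝ := sv / (sv - Dq (p i) (p j) x) with ht'def
  have ht'0 : 0 < t' := div_pos hsv hd
  have ht'1 : t' ≤ 1 := by rw [ht'def, div_le_one hd]; linarith
  set y : Pt := p v + t' • (x - p v) with hydef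
  have hsy : Dq (p i) (p j) y = 0 := by
    rw [hydef, Dq_affine, detv_line, ht'def]
    field_simp
    rw [hsvdef]
    ring
  have hyP : y ∈ convexHull ℝ (Set.range p) := by
    have h1 : p v ∈ convexHull ℝ (Set.range p) := subset_convexHull ℝ _ (Set.mem_range_self v)
    have h2 : x ∈ convexHull ℝ (Set.range p) := convexHull_mono hQ hx
    have hyy : y = (1 - t') • p v + t' • x := by rw [hydef]; module
    rw [hyy]
    exact (convex_convexHull ℝ (Set.range p)) h1 h2 (by linarith) ht'0.le (by ring)
  obtain ⟨t, hty⟩ : ∃ t : ℝ, y - p i = t • w := detv_zero_parallel hw hsy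
  have hyt : y = p i + t • w := by rw [← hty]; abel
  have line_eval : ∀ a : Fin n, Dq (p a) (p (a + 1)) y
      = Dq (p a) (p (a + 1)) (p i)
        + t * (Dq (p a) (p (a + 1)) (p j) - Dq (p a) (p (a + 1)) (p i)) := by
    intro a
    rw [hyt, Dq_affine, hwdef, detv_line]
  have ht1 : t ≤ 1 := by
    by_cases hc : i = j + 1
    · have ha1 : (j - 1) + 1 = j := sub_add_cancel j 1
      have hii : i ≠ j - 1 := fun h => succ_ne_pred hn3 j (by rw [← hc, ← h])
      have hepj : Dq (p (j - 1)) (p ((j - 1) + 1)) (p j) = 0 := by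
        rw [ha1]; exact Dq_self₂ _ _
      have hepi : Dq (p (j - 1)) (p ((j - 1) + 1)) (p i) < 0 := by
        apply cyc hcw
        · rw [succ_sub_val hn2]; omega
        · rw [succ_sub_val hn2]
          exact one_lt_sub hn2 hii (by rw [ha1]; exact hij)
      have hey := hPe (j - 1) y hyP
      rw [line_eval (j - 1), hepj] at hey
      nlinarith [hey, hepi]
    · have hepj : Dq (p j) (p (j + 1)) (p j) = 0 := Dq_self₁ _ _
      have hepi : Dq (p j) (p (j + 1)) (p i) < 0 := by
        apply cyc hcw
        · rw [succ_sub_val hn2]; omega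
        · rw [succ_sub_val hn2]
          exact one_lt_sub hn2 hij hc
      have hey := hPe j y hyP
      rw [line_eval j, hepj] at hey
      nlinarith [hey, hepi]
  have ht0 : 0 ≤ t := by
    by_cases hc : j = i + 1
    · have ha1 : (i - 1) + 1 = i := sub_add_cancel i 1
      have hjj : j ≠ i - 1 := fun h => succ_ne_pred hn3 i (by rw [← hc, ← h])
      have hepi0 : Dq (p (i - 1)) (p ((i - 1) + 1)) (p i) = 0 := by
        rw [ha1]; exact Dq_self₂ _ _
      have hepj : Dq (p (i - 1)) (p ((i - 1) + 1)) (p j) < 0 := by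
        apply cyc hcw
        · rw [succ_sub_val hn2]; omega
        · rw [succ_sub_val hn2]
          exact one_lt_sub hn2 hjj (by rw [ha1]; exact Ne.symm hij)
      have hey := hPe (i - 1) y hyP
      rw [line_eval (i - 1), hepi0] at hey
      nlinarith [hey, hepj]
    · have hepi0 : Dq (p i) (p (i + 1)) (p i) = 0 := Dq_self₁ _ _
      have hepj : Dq (p i) (p (i + 1)) (p j) < 0 := by
        apply cyc hcw
        · rw [succ_sub_val hn2]; omega
        · rw [succ_sub_val hn2]
          exact one_lt_sub hn2 (Ne.symm hij) hc
      have hey := hPe i y hyP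
      rw [line_eval i, hepi0] at hey
      nlinarith [hey, hepj]
  have hyseg : y ∈ segment ℝ (p i) (p j) :=
    ⟨1 - t, t, by linarith, ht0, by ring, by rw [hyt, hwdef]; module⟩
  calc Metric.infDist (p v) (segment ℝ (p i) (p j)) ≤ dist (p v) y :=
        infDist_le_dist_of_mem hyseg
    _ ≤ dist (p v) x := by
        have hdy : dist (p v) y = t' * dist (p v) x := by
          rw [dist_eq_norm, dist_eq_norm,
            show p v - y = t' • (p v - x) by rw [hydef]; module, norm_smul]
          simp [abs_of_nonneg ht'0.le]
        rw [hdy]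
        nlinarith [dist_nonneg (x := p v) (y := x), ht'1]

lemma choose_ij {n : ℕ} [NeZero n] (I : Set (Fin n)) (m : Fin n) (hm : m ∉ I)
    (h2 : ∃ x y, x ∈ I ∧ y ∈ I ∧ x ≠ y) :
    ∃ i j, i ∈ I ∧ j ∈ I ∧ i ≠ j ∧ (m - i).val ≤ (j - i).val ∧
      (∀ q ∈ I, (q - i).val ≤ (j - i).val → q = i ∨ q = j) := by
  obtain ⟨x0, y0, hx0, hy0, hxy0⟩ := h2
  have hIne : I.Nonempty := ⟨x0, hx0⟩
  have hIfin : I.Finite := Set.toFinite I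
  obtain ⟨i, hiI, hi⟩ := Set.exists_min_image I (fun a => (m - a).val) hIfin hIne
  obtain ⟨j, hjI, hj⟩ := Set.exists_max_image I (fun a => (m - a).val) hIfin hIne
  have hvalinj : ∀ x y : Fin n, (x : Fin n) ≠ y → x.val ≠ y.val :=
    fun x y h hh => h (Fin.val_inj.mp hh)
  have hN := m.isLt
  have hij : i ≠ j := by
    rintro rfl
    have hx := hi x0 hx0
    have hy := hi y0 hy0
    have hx' := hj x0 hx0
    have hy' := hj y0 hy0
    have hvv : (m - x0).val = (m - y0).val := by omega
    exact hxy0 (sub_right_inj.mp (Fin.val_inj.mp hvv))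
  have hmi : m ≠ i := fun h => hm (h ▸ hiI)
  have hmj : m ≠ j := fun h => hm (h ▸ hjI)
  refine ⟨i, j, hiI, hjI, hij, ?_, ?_⟩
  · have h1 := hi j hjI
    have h2 := hj i hiI
    have e1 := hvalinj i j hij
    have e2 := hvalinj m i hmi
    have e3 := hvalinj m j hmj
    have l1 := i.isLt; have l2 := j.isLt
    simp only [fsub_val] at h1 h2 ⊢
    split_ifs at * <;> omega
  · intro q hqI hq
    by_cases hqi : q = i
    · exact Or.inl hqi
    by_cases hqj : q = j
    · exact Or.inr hqj
    exfalso
    have h1 := hi q hqI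
    have h2 := hj q hqI
    have h3 := hi j hjI
    have h4 := hj i hiI
    have e1 := hvalinj i j hij
    have e2 := hvalinj m i hmi
    have e3 := hvalinj m j hmj
    have e4 := hvalinj q i hqi
    have e5 := hvalinj q j hqj
    have e6 := hvalinj m q (fun h => hm (h ▸ hqI))
    have l1 := i.isLt; have l2 := j.isLt; have l3 := q.isLt
    simp only [fsub_val] at h1 h2 h3 h4 hq
    split_ifs at * <;> omega

end Aux

namespace Aux

lemma cost_anti {Q Q' P : Set Pt} (hP : P.Finite) (hPne : P.Nonempty)
    (h : Q ⊆ Q') (hQne : Q.Nonempty) : cost Q' P ≤ cost Q P := by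
  refine csSup_le (hPne.image _) ?_
  rintro y ⟨x, hxP, rfl⟩
  calc Metric.infDist x (convexHull ℝ Q') ≤ Metric.infDist x (convexHull ℝ Q) :=
        infDist_le_infDist_of_subset (convexHull_mono h)
          (hQne.mono (subset_convexHull ℝ Q))
    _ ≤ _ := le_csSup (hP.image _).bddAbove (Set.mem_image_of_mem _ hxP)

end Aux


open Aux

theorem stmt_7 (n k : ℕ) (hk2 : 2 ≤ k) (hkn : k ≤ n) (p : Fin n → Pt)
    (hinj : Function.Injective p)
    (hcw : ∀ i j l : Fin n, i < j → j < l → detv (p j - p i) (p l - p i) < 0) :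
    ∃ i j : Fin n,
      sInf { c : ℝ | ∃ Q : Set Pt, Q ⊆ Set.range p ∧ Q.Nonempty ∧ Q.ncard ≤ k ∧
        c = cost Q (Set.range p) } = cost0 p i j := by
  have hn2 : 2 ≤ n := le_trans hk2 hkn
  haveI : NeZero n := ⟨by omega⟩
  set P := Set.range p with hPdef
  have hPfin : P.Finite := Set.finite_range p
  have hPne : P.Nonempty := ⟨p ⟨0, by omega⟩, Set.mem_range_self _⟩
  set S := { c : ℝ | ∃ Q : Set Pt, Q ⊆ P ∧ Q.Nonempty ∧ Q.ncard ≤ k ∧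
      c = cost Q P } with hSdef
  have hSsub : S ⊆ (fun Q => cost Q P) '' {Q | Q ⊆ P} := by
    rintro c ⟨Q, hQ1, _, _, rfl⟩
    exact ⟨Q, hQ1, rfl⟩
  have hSfin : S.Finite := ((hPfin.finite_subsets).image _).subset hSsub
  have hSne : S.Nonempty :=
    ⟨cost {p ⟨0, by omega⟩} P, {p ⟨0, by omega⟩},
      Set.singleton_subset_iff.mpr (Set.mem_range_self _), Set.singleton_nonempty _,
      by rw [Set.ncard_singleton]; omega, rfl⟩
  obtain ⟨Q0, hQ0P, hQ0ne, hQ0k, hc0⟩ := hSne.csInf_mem hSfin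
  -- we may assume the optimal set has at least two points
  obtain ⟨Q, hQP, hQk, hQcost, x1, y1, hx1, hy1, hxy1⟩ :
      ∃ Q : Set Pt, Q ⊆ P ∧ Q.ncard ≤ k ∧ cost Q P = sInf S ∧
        ∃ x y, x ∈ Q ∧ y ∈ Q ∧ x ≠ y := by
    by_cases h2 : ∃ x y, x ∈ Q0 ∧ y ∈ Q0 ∧ x ≠ y
    · exact ⟨Q0, hQ0P, hQ0k, hc0.symm, h2⟩
    · push_neg at h2
      obtain ⟨q, hq⟩ := hQ0ne
      obtain ⟨i0, hi0⟩ := hQ0P hq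
      have hi01 : i0 + 1 ≠ i0 := by
        intro h
        have h1 : (1 : Fin n) = 0 := by
          have := add_left_cancel (a := i0) (b := (1 : Fin n)) (c := 0)
            (by rw [add_zero]; exact h)
          exact this
        have h3 := congrArg Fin.val h1
        rw [Fin.val_one', Nat.mod_eq_of_lt (show 1 < n by omega)] at h3
        simp at h3
      have hp1 : p (i0 + 1) ≠ q := by
        rw [← hi0]; exact fun h => hi01 (hinj h)
      have hcard : (insert (p (i0 + 1)) Q0).ncard ≤ k := by
        have hsub : Q0 ⊆ {q} := fun z hz => Set.mem_singleton_iff.mpr (h2 z q hz hq)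
        have h1 : Q0.ncard ≤ 1 :=
          le_trans (Set.ncard_le_ncard hsub (Set.finite_singleton q)) (by simp)
        calc (insert (p (i0 + 1)) Q0).ncard ≤ Q0.ncard + 1 := Set.ncard_insert_le _ _
          _ ≤ 2 := by omega
          _ ≤ k := hk2
      refine ⟨insert (p (i0 + 1)) Q0, Set.insert_subset (Set.mem_range_self _) hQ0P, hcard,
        le_antisymm ?_ ?_, p (i0 + 1), q, Set.mem_insert _ _, Set.mem_insert_of_mem _ hq, hp1⟩
      · calc cost (insert (p (i0 + 1)) Q0) P ≤ cost Q0 P :=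
              cost_anti hPfin hPne (Set.subset_insert _ _) ⟨q, hq⟩
          _ = sInf S := hc0.symm
      · exact csInf_le hSfin.bddBelow
          ⟨insert (p (i0 + 1)) Q0, Set.insert_subset (Set.mem_range_self _) hQ0P,
            ⟨q, Set.mem_insert_of_mem _ hq⟩, hcard, rfl⟩
  -- pick the farthest point
  have hTfin : ((fun x => Metric.infDist x (convexHull ℝ Q)) '' P).Finite := hPfin.image _
  have hTne : ((fun x => Metric.infDist x (convexHull ℝ Q)) '' P).Nonempty := hPne.image _
  have hmem : cost Q P ∈ (fun x => Metric.infDist x (convexHull ℝ Q)) '' P :=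
    hTne.csSup_mem hTfin
  obtain ⟨xm, hxmP, hxm⟩ := hmem
  obtain ⟨m, rfl⟩ := hxmP
  have hub : ∀ u : Fin n, Metric.infDist (p u) (convexHull ℝ Q) ≤ cost Q P := fun u =>
    le_csSup hTfin.bddAbove ⟨p u, Set.mem_range_self u, rfl⟩
  by_cases hmQ : p m ∈ Q
  · refine ⟨m, m, ?_⟩
    have h0 : cost Q P = 0 := by
      rw [← hxm]
      exact infDist_zero_of_mem (subset_convexHull ℝ Q hmQ)
    rw [← hQcost, h0]
    have hset : {v : Fin n | v - m ≤ m - m} = {m} := by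
      ext v
      simp only [Set.mem_setOf_eq, Set.mem_singleton_iff, sub_self]
      constructor
      · intro h
        have h2 := Fin.le_def.mp h
        simp only [Fin.val_zero] at h2
        have h3 : (v - m).val = 0 := by omega
        have h1 : v - m = 0 := Fin.val_inj.mp (by rw [h3]; simp)
        exact sub_eq_zero.mp h1
      · rintro rfl
        rw [sub_self]
    rw [cost0, hset, Set.image_singleton, csSup_singleton,
      infDist_zero_of_mem (left_mem_segment ℝ (p m) (p m))]
  · set I : Set (Fin n) := {a | p a ∈ Q} with hIdef
    have hmI : m ∉ I := hmQ
    have h2I : ∃ x y, x ∈ I ∧ y ∈ I ∧ x ≠ y := by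
      obtain ⟨a, ha⟩ := hQP hx1
      obtain ⟨b, hb⟩ := hQP hy1
      refine ⟨a, b, ?_, ?_, fun hab => hxy1 (by rw [← ha, ← hb, hab])⟩
      · show p a ∈ Q; rw [ha]; exact hx1
      · show p b ∈ Q; rw [hb]; exact hy1
    obtain ⟨i, j, hiI, hjI, hij, hmarc, hcons⟩ := choose_ij I m hmI h2I
    have hiQ : p i ∈ Q := hiI
    have hjQ : p j ∈ Q := hjI
    refine ⟨i, j, ?_⟩
    rw [← hQcost]
    have hCfin : ((fun v => Metric.infDist (p v) (segment ℝ (p i) (p j))) ''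
        {v : Fin n | v - i ≤ j - i}).Finite := Set.toFinite _
    have hmmem : m ∈ {v : Fin n | v - i ≤ j - i} := Fin.le_def.mpr hmarc
    apply le_antisymm
    · rw [← hxm]
      calc Metric.infDist (p m) (convexHull ℝ Q)
          ≤ Metric.infDist (p m) (segment ℝ (p i) (p j)) :=
            infDist_le_infDist_of_subset (segment_subset_convexHull hiQ hjQ)
              ⟨p i, left_mem_segment ℝ (p i) (p j)⟩
        _ ≤ cost0 p i j := le_csSup hCfin.bddAbove ⟨m, hmmem, rfl⟩
    · refine csSup_le ⟨_, ⟨m, hmmem, rfl⟩⟩ ?_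
      rintro y ⟨u, hu, rfl⟩
      calc Metric.infDist (p u) (segment ℝ (p i) (p j))
          ≤ Metric.infDist (p u) (convexHull ℝ Q) :=
            key hinj hcw hQP hij hiQ hjQ
              (fun q hq hql => hcons q hq hql) (Fin.le_def.mp hu)
        _ ≤ cost Q P := hub u
end
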